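/- arXiv:2207.04327 — 4 statements merged into one kernel-verified Lean document; each statement's English description precedes it below -/
import Mathlib

section
/- Let A be an m×n real matrix, I a set of row indices and J a set of column indices. If the submatrix U = A(I,J) satisfies rank(U) = rank(A), then A = C U† R, where C = A(:,J) is the column submatrix, R = A(I,:) is the row submatrix, and U† denotes the Moore–Penrose pseudoinverse. -/
/-!
Write `C = A(:, c)`, `R = A(r, :)` and `U = A(r, c) = R(:, c)`. Passing to a submatrix cannot raise
the rank, so `rank U = rank A` forces `rank R = rank A` and `rank U = rank R`. A column submatrix of
full rank spans the whole column space, so `R = U Z` for some `Z`; transposing, `A = Y R` for some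
`Y`, and restricting to the columns `c` gives `C = Y U`. Hence for any `X` with `U X U = U`,
`A = Y U Z = Y U X U Z = C X R`.
-/

open Matrix

/-- Frobenius norm of a real matrix. -/
noncomputable def frobNorm {m n : Type*} [Fintype m] [Fintype n]
    (A : Matrix m n ℝ) : ℝ := Real.sqrt (∑ i, ∑ j, (A i j) ^ 2)

/-- Spectral (operator) norm of a real matrix. -/
noncomputable def specNorm {m n : ℕ} (A : Matrix (Fin m) (Fin n) ℝ) : ℝ :=
  ‖LinearMap.toContinuousLinearMap (Matrix.toEuclideanLin A)‖

/-- `B` is the Moore–Penrose pseudoinverse of `A`. -/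
def IsMPInv {m n : ℕ} (A : Matrix (Fin m) (Fin n) ℝ)
    (B : Matrix (Fin n) (Fin m) ℝ) : Prop :=
  A * B * A = A ∧ B * A * B = B ∧ (A * B)ᵀ = A * B ∧ (B * A)ᵀ = B * A

/-- `B` is the `τ`-truncated Moore–Penrose pseudoinverse of `A`: singular values
of `A` below `τ` are set to zero before pseudoinverting. -/
def IsTruncatedPinv {m n : ℕ} (A : Matrix (Fin m) (Fin n) ℝ) (τ : ℝ)
    (B : Matrix (Fin n) (Fin m) ℝ) : Prop :=
  ∃ (r : ℕ) (W : Matrix (Fin m) (Fin r) ℝ) (V : Matrix (Fin n) (Fin r) ℝ)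
    (σ : Fin r → ℝ),
    Wᵀ * W = 1 ∧ Vᵀ * V = 1 ∧ (∀ i, 0 < σ i) ∧
    A = W * Matrix.diagonal σ * Vᵀ ∧
    B = V * Matrix.diagonal (fun i => if τ ≤ σ i then (σ i)⁻¹ else 0) * Wᵀ

/-- `B` is `A` with its singular values below `τ` set to zero. -/
def IsTruncation {m n : ℕ} (A : Matrix (Fin m) (Fin n) ℝ) (τ : ℝ)
    (B : Matrix (Fin m) (Fin n) ℝ) : Prop :=
  ∃ (r : ℕ) (W : Matrix (Fin m) (Fin r) ℝ) (V : Matrix (Fin n) (Fin r) ℝ)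
    (σ : Fin r → ℝ),
    Wᵀ * W = 1 ∧ Vᵀ * V = 1 ∧ (∀ i, 0 < σ i) ∧
    A = W * Matrix.diagonal σ * Vᵀ ∧
    B = W * Matrix.diagonal (fun i => if τ ≤ σ i then σ i else 0) * Vᵀ

namespace Matrix

variable {K : Type*} [Field K] {m n ι κ : Type*}

lemma range_mulVecLin_submatrix_id_le [Fintype n] [Fintype κ] (A : Matrix m n K) (c : κ → n) :
    LinearMap.range (A.submatrix id c).mulVecLin ≤ LinearMap.range A.mulVecLin := by
  rw [range_mulVecLin, range_mulVecLin]
  exact Submodule.span_mono (Set.range_subset_iff.2 fun j => ⟨c j, rfl⟩)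

lemma exists_eq_mul_of_range_mulVecLin_le [Fintype n] [Fintype κ] {A : Matrix m n K}
    {B : Matrix m κ K} (h : LinearMap.range A.mulVecLin ≤ LinearMap.range B.mulVecLin) :
    ∃ Z : Matrix κ n K, A = B * Z := by
  have hcol (j : n) : A.col j ∈ LinearMap.range B.mulVecLin :=
    h (A.range_mulVecLin ▸ Submodule.subset_span ⟨j, rfl⟩)
  choose x hx using hcol
  refine ⟨(of x)ᵀ, ?_⟩
  ext i j
  exact (congrFun (hx j) i).symm

lemma exists_eq_submatrix_id_mul_of_rank_eq [Fintype n] [Fintype κ] (A : Matrix m n K)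
    (c : κ → n) (h : (A.submatrix id c).rank = A.rank) :
    ∃ Z : Matrix κ n K, A = A.submatrix id c * Z := by
  have hle := A.range_mulVecLin_submatrix_id_le c
  have hrange := Submodule.eq_of_le_of_finrank_le hle h.ge
  exact exists_eq_mul_of_range_mulVecLin_le hrange.ge

lemma exists_eq_mul_submatrix_id_of_rank_eq [Fintype m] [Fintype n] [Fintype ι]
    (A : Matrix m n K) (r : ι → m) (h : (A.submatrix r id).rank = A.rank) :
    ∃ Y : Matrix m ι K, A = Y * A.submatrix r id := by
  have hT : (Aᵀ.submatrix id r).rank = Aᵀ.rank := by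
    rw [← transpose_submatrix, rank_transpose, rank_transpose, h]
  obtain ⟨Z, hZ⟩ := Aᵀ.exists_eq_submatrix_id_mul_of_rank_eq r hT
  refine ⟨Zᵀ, ?_⟩
  simpa only [transpose_transpose, transpose_mul, transpose_submatrix] using congrArg transpose hZ

theorem eq_submatrix_mul_mul_submatrix_of_rank_eq [Fintype m] [Fintype n] [Fintype ι]
    [Fintype κ] (A : Matrix m n K) (r : ι → m) (c : κ → n) (X : Matrix κ ι K)
    (hX : A.submatrix r c * X * A.submatrix r c = A.submatrix r c)
    (hrank : (A.submatrix r c).rank = A.rank) :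
    A = A.submatrix id c * X * A.submatrix r id := by
  set R := A.submatrix r id
  set U := A.submatrix r c
  have hrankR : R.rank = A.rank :=
    le_antisymm (A.rank_submatrix_le r id) (hrank ▸ R.rank_submatrix_le id c)
  obtain ⟨Y, hY : A = Y * R⟩ := A.exists_eq_mul_submatrix_id_of_rank_eq r hrankR
  obtain ⟨Z, hZ : R = U * Z⟩ := R.exists_eq_submatrix_id_mul_of_rank_eq c (hrankR ▸ hrank)
  have hC : A.submatrix id c = Y * U := by
    rw [hY]
    rfl
  calc A = Y * (U * Z) := hY.trans (congrArg (Y * ·) hZ)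
    _ = Y * (U * X * U * Z) := by rw [hX]
    _ = Y * U * X * (U * Z) := by simp only [Matrix.mul_assoc]
    _ = A.submatrix id c * X * R := by rw [← hC, ← hZ]

end Matrix

theorem cross_approx_exact_general {m n p q : ℕ} (A : Matrix (Fin m) (Fin n) ℝ)
    (g : Fin p → Fin m) (f : Fin q → Fin n)
    (Udag : Matrix (Fin q) (Fin p) ℝ)
    (hUdag : IsMPInv (A.submatrix g f) Udag)
    (hrank : (A.submatrix g f).rank = A.rank) :
    A = A.submatrix id f * Udag * A.submatrix g id :=
  A.eq_submatrix_mul_mul_submatrix_of_rank_eq g f Udag hUdag.1 hrank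

/-- if `rank U = rank A` for `U = A(I,J)`, then `A = C U† R`. -/
theorem cross_approx_exact {m n p q : ℕ} (A : Matrix (Fin m) (Fin n) ℝ)
    (g : Fin p → Fin m) (f : Fin q → Fin n)
    (hg : Function.Injective g) (hf : Function.Injective f)
    (Udag : Matrix (Fin q) (Fin p) ℝ)
    (hUdag : IsMPInv (A.submatrix g f) Udag)
    (hrank : (A.submatrix g f).rank = A.rank) :
    A = A.submatrix id f * Udag * A.submatrix g id :=
  cross_approx_exact_general A g f Udag hUdag hrank
end

section
/- Let A be an m×n real matrix, I ⊆ [m], J ⊆ [n], with U = A(I,J) and R = A(I,:). If rank(U) = rank(A), then R = U U† R. -/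
open Matrix

/-- if `rank U = rank A`, then `R = U U† R`. -/
theorem row_submatrix_eq_UUdagR {m n p q : ℕ} (A : Matrix (Fin m) (Fin n) ℝ)
    (g : Fin p → Fin m) (f : Fin q → Fin n)
    (hg : Function.Injective g) (hf : Function.Injective f)
    (Udag : Matrix (Fin q) (Fin p) ℝ)
    (hUdag : IsMPInv (A.submatrix g f) Udag)
    (hrank : (A.submatrix g f).rank = A.rank) :
    A.submatrix g id = A.submatrix g f * Udag * A.submatrix g id := by
  classical
  set U := A.submatrix g f with hU
  set R := A.submatrix g id with hR
  -- range U ≤ range R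
  have hUR : LinearMap.range U.mulVecLin ≤ LinearMap.range R.mulVecLin := by
    rintro x ⟨v, rfl⟩
    refine ⟨fun j => ∑ k, if f k = j then v k else 0, ?_⟩
    ext i
    simp only [mulVecLin_apply, mulVec, dotProduct, hU, hR, submatrix_apply, id,
      Finset.mul_sum, mul_ite, mul_zero]
    rw [Finset.sum_comm]
    congr 1; ext k
    simp
  -- R.mulVecLin factors through A.mulVecLin
  have hfac : R.mulVecLin = (LinearMap.funLeft ℝ ℝ g).comp A.mulVecLin := by
    ext v i
    simp [mulVecLin_apply, hR, mulVec, dotProduct, LinearMap.funLeft, Pi.single_apply]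
  have hRA : R.rank ≤ A.rank := by
    rw [Matrix.rank, Matrix.rank, hfac, LinearMap.range_comp]
    exact (Submodule.finrank_map_le _ _)
  have hUleR : U.rank ≤ R.rank := Submodule.finrank_mono hUR
  have hranges : LinearMap.range U.mulVecLin = LinearMap.range R.mulVecLin := by
    apply Submodule.eq_of_le_of_finrank_le hUR
    calc Module.finrank ℝ (LinearMap.range R.mulVecLin) = R.rank := rfl
      _ ≤ A.rank := hRA
      _ = U.rank := hrank.symm
      _ = Module.finrank ℝ (LinearMap.range U.mulVecLin) := rfl
  -- columns of R lie in range of U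
  ext i k
  have hcol : (fun i => R i k) ∈ LinearMap.range U.mulVecLin := by
    rw [hranges]
    refine ⟨Pi.single k 1, ?_⟩
    ext i
    simp [mulVecLin_apply, mulVec, dotProduct, Pi.single_apply]
  obtain ⟨y, hy⟩ := hcol
  simp only [mulVecLin_apply] at hy
  have h1 : (U * Udag * R) i k = ((U * Udag).mulVec fun i => R i k) i := by
    simp [mulVec, dotProduct, Matrix.mul_apply]
  rw [h1, ← hy, Matrix.mulVec_mulVec, show U * Udag * U = U from hUdag.1, hy]
end

section
/- Let Ã = A + E ∈ ℝ^{m×n} with A = A_r + F, A_r of rank r with compact SVD A_r = W Σ Vᵀ, and rank(A_r(I,J)) = r. Let C̃ = Ã(:,J), Ũ = Ã(I,J), R̃ = Ã(I,:), and write a = ‖(W(I,:))†‖₂, b = ‖(V(J,:))†‖₂. Then ‖A − C̃ Ũ† R̃‖_F ≤ (a + b + 3ab)‖E‖_F + (a + b + 3ab + 1)‖F‖_F + (a + b + ab + 1)‖Ũ†‖₂ (‖E‖_F + ‖F‖_F)². -/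
open Matrix

/-! With `K = W W_I†` and `L = V_J†ᵀ Vᵀ`, the rank condition makes `W_I = W(I,:)` and
`V_J = V(J,:)` left-invertible by their pseudoinverses, so that `A_r = K U L`, `A_r(:,J) = K U` and
`A_r(I,:) = U L` for the core `U = A_r(I,J)`. Put `N = F + E`, so `Ũ = U + N(I,J)`,
`C̃ = K Ũ + X` and `R̃ = Ũ L + Y` with `X = N(:,J) - K N(I,J)`, `Y = N(I,:) - N(I,J) L`.
Since `Ũ Ũ† Ũ = Ũ`,
`A_r - C̃ Ũ† R̃ = -K N(I,J) L - K (Ũ Ũ†) Y - X (Ũ† Ũ) L - X Ũ† Y`.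
The projections `Ũ Ũ†`, `Ũ† Ũ` have spectral norm at most one, `‖K‖₂ ≤ a`, `‖L‖₂ ≤ b`,
and every block of `N` has Frobenius norm at most `ε = ‖E‖_F + ‖F‖_F`, which bounds the four
terms by `abε`, `a(1+b)ε`, `(1+a)bε` and `(1+a)(1+b)‖Ũ†‖₂ε²`. Adding `‖F‖_F` for `A - A_r`
gives the claim. -/

section Frobenius

attribute [local instance] Matrix.frobeniusNormedAddCommGroup

variable {l m n p q : Type*} [Fintype l] [Fintype m] [Fintype n] [Fintype p] [Fintype q]

theorem frobNorm_eq_norm (A : Matrix m n ℝ) : frobNorm A = ‖A‖ := by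
  rw [frobNorm, frobenius_norm_def, Real.sqrt_eq_rpow]
  simp only [Real.norm_eq_abs, Real.rpow_two, sq_abs]

theorem frobNorm_nonneg (A : Matrix m n ℝ) : 0 ≤ frobNorm A := Real.sqrt_nonneg _

theorem frobNorm_add_le (A B : Matrix m n ℝ) : frobNorm (A + B) ≤ frobNorm A + frobNorm B := by
  simpa only [frobNorm_eq_norm] using norm_add_le A B

theorem frobNorm_sub_le (A B : Matrix m n ℝ) : frobNorm (A - B) ≤ frobNorm A + frobNorm B := by
  simpa only [frobNorm_eq_norm] using norm_sub_le A B

theorem frobNorm_neg (A : Matrix m n ℝ) : frobNorm (-A) = frobNorm A := by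
  simpa only [frobNorm_eq_norm] using norm_neg A

theorem frobNorm_mul_le (A : Matrix l m ℝ) (B : Matrix m n ℝ) :
    frobNorm (A * B) ≤ frobNorm A * frobNorm B := by
  simpa only [frobNorm_eq_norm] using frobenius_norm_mul A B

theorem frobNorm_transpose (A : Matrix m n ℝ) : frobNorm Aᵀ = frobNorm A := by
  simpa only [frobNorm_eq_norm] using frobenius_norm_transpose A

theorem frobNorm_sq_eq_sum_norm_col_sq (A : Matrix m n ℝ) :
    frobNorm A ^ 2 = ∑ j, ‖WithLp.toLp 2 (Aᵀ j)‖ ^ 2 := by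
  rw [frobNorm, Real.sq_sqrt (by positivity), Finset.sum_comm]
  simp [EuclideanSpace.norm_sq_eq]

theorem sum_comp_le_sum_of_injective {ι κ : Type*} [Fintype ι] [Fintype κ] {e : ι → κ}
    (he : Function.Injective e) {h : κ → ℝ} (hh : ∀ x, 0 ≤ h x) :
    ∑ i, h (e i) ≤ ∑ x, h x := by
  simpa using Finset.sum_le_univ_sum_of_nonneg (s := Finset.univ.map ⟨e, he⟩) hh

theorem frobNorm_submatrix_le (A : Matrix m n ℝ) {g : p → m} {f : q → n}
    (hg : Function.Injective g) (hf : Function.Injective f) :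
    frobNorm (A.submatrix g f) ≤ frobNorm A := by
  refine Real.sqrt_le_sqrt ?_
  calc ∑ i, ∑ j, A (g i) (f j) ^ 2 ≤ ∑ i, ∑ b, A (g i) b ^ 2 :=
        Finset.sum_le_sum fun i _ => sum_comp_le_sum_of_injective hf fun _ => sq_nonneg _
    _ ≤ ∑ a, ∑ b, A a b ^ 2 :=
        sum_comp_le_sum_of_injective (h := fun a => ∑ b, A a b ^ 2) hg fun _ => by positivity

end Frobenius

section Spectral

open scoped Matrix.Norms.L2Operator

variable {k m n : ℕ}

theorem specNorm_eq_norm (A : Matrix (Fin m) (Fin n) ℝ) : specNorm A = ‖A‖ := rfl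

theorem specNorm_nonneg (A : Matrix (Fin m) (Fin n) ℝ) : 0 ≤ specNorm A := norm_nonneg _

theorem specNorm_mul_le (A : Matrix (Fin m) (Fin n) ℝ) (B : Matrix (Fin n) (Fin k) ℝ) :
    specNorm (A * B) ≤ specNorm A * specNorm B :=
  l2_opNorm_mul A B

theorem specNorm_transpose (A : Matrix (Fin m) (Fin n) ℝ) : specNorm Aᵀ = specNorm A := by
  simpa only [specNorm_eq_norm, conjTranspose_eq_transpose_of_trivial]
    using l2_opNorm_conjTranspose A

theorem norm_toLp_mulVec_le (A : Matrix (Fin m) (Fin n) ℝ) (v : Fin n → ℝ) :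
    ‖WithLp.toLp 2 (A *ᵥ v)‖ ≤ specNorm A * ‖WithLp.toLp 2 v‖ :=
  l2_opNorm_mulVec A (WithLp.toLp 2 v)

theorem specNorm_transpose_mul_self (A : Matrix (Fin m) (Fin n) ℝ) :
    specNorm (Aᵀ * A) = specNorm A * specNorm A := by
  simpa only [specNorm_eq_norm, conjTranspose_eq_transpose_of_trivial]
    using l2_opNorm_conjTranspose_mul_self A

theorem specNorm_le_one_of_transpose_mul_self_eq_one {V : Matrix (Fin m) (Fin n) ℝ}
    (hV : Vᵀ * V = 1) : specNorm V ≤ 1 := by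
  have h1 : specNorm (1 : Matrix (Fin n) (Fin n) ℝ) ≤ 1 := by
    rw [specNorm_eq_norm, ← l2_opNorm_toEuclideanCLM, map_one]
    exact ContinuousLinearMap.norm_id_le
  rw [← hV, specNorm_transpose_mul_self] at h1
  nlinarith [specNorm_nonneg V]

theorem specNorm_le_one_of_transpose_eq_of_mul_self_eq {P : Matrix (Fin n) (Fin n) ℝ}
    (hsymm : Pᵀ = P) (hidem : P * P = P) : specNorm P ≤ 1 := by
  have h := specNorm_transpose_mul_self P
  rw [hsymm, hidem] at h
  nlinarith [specNorm_nonneg P]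

theorem specNorm_mul_le_of_transpose_mul_self_eq_one {V : Matrix (Fin m) (Fin n) ℝ}
    (hV : Vᵀ * V = 1) (B : Matrix (Fin n) (Fin k) ℝ) : specNorm (V * B) ≤ specNorm B :=
  (specNorm_mul_le V B).trans
    (mul_le_of_le_one_left (specNorm_nonneg B) (specNorm_le_one_of_transpose_mul_self_eq_one hV))

theorem specNorm_mul_transpose_le_of_transpose_mul_self_eq_one {V : Matrix (Fin m) (Fin n) ℝ}
    (hV : Vᵀ * V = 1) (B : Matrix (Fin k) (Fin n) ℝ) :
    specNorm (B * Vᵀ) ≤ specNorm B := by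
  rw [← specNorm_transpose, transpose_mul, transpose_transpose, ← specNorm_transpose B]
  exact specNorm_mul_le_of_transpose_mul_self_eq_one hV Bᵀ

end Spectral

theorem frobNorm_mul_le_specNorm_mul {m n : ℕ} {ι : Type*} [Fintype ι]
    (A : Matrix (Fin m) (Fin n) ℝ) (B : Matrix (Fin n) ι ℝ) :
    frobNorm (A * B) ≤ specNorm A * frobNorm B := by
  have hcol : ∀ j, (A * B)ᵀ j = A *ᵥ Bᵀ j := fun j => by
    ext i; simp [Matrix.mul_apply, Matrix.mulVec, dotProduct]
  refine (pow_le_pow_iff_left₀ (frobNorm_nonneg _)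
    (mul_nonneg (specNorm_nonneg A) (frobNorm_nonneg B)) two_ne_zero).1 ?_
  rw [mul_pow, frobNorm_sq_eq_sum_norm_col_sq, frobNorm_sq_eq_sum_norm_col_sq, Finset.mul_sum]
  refine Finset.sum_le_sum fun j _ => ?_
  rw [hcol, ← mul_pow]
  exact pow_le_pow_left₀ (norm_nonneg _) (norm_toLp_mulVec_le A _) 2

theorem frobNorm_mul_le_mul_specNorm {m n : ℕ} {ι : Type*} [Fintype ι]
    (A : Matrix ι (Fin m) ℝ) (B : Matrix (Fin m) (Fin n) ℝ) :
    frobNorm (A * B) ≤ frobNorm A * specNorm B := by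
  rw [← frobNorm_transpose, Matrix.transpose_mul, mul_comm, ← frobNorm_transpose A,
    ← specNorm_transpose B]
  exact frobNorm_mul_le_specNorm_mul Bᵀ Aᵀ

theorem frobNorm_mul_le_of_specNorm_le_of_frobNorm_le {m n : ℕ} {ι : Type*} [Fintype ι]
    {A : Matrix (Fin m) (Fin n) ℝ} {B : Matrix (Fin n) ι ℝ} {a b : ℝ} (hA : specNorm A ≤ a)
    (hB : frobNorm B ≤ b) : frobNorm (A * B) ≤ a * b :=
  (frobNorm_mul_le_specNorm_mul A B).trans
    (mul_le_mul hA hB (frobNorm_nonneg B) ((specNorm_nonneg A).trans hA))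

theorem frobNorm_mul_le_of_frobNorm_le_of_specNorm_le {m n : ℕ} {ι : Type*} [Fintype ι]
    {A : Matrix ι (Fin m) ℝ} {B : Matrix (Fin m) (Fin n) ℝ} {a b : ℝ} (hA : frobNorm A ≤ a)
    (hB : specNorm B ≤ b) : frobNorm (A * B) ≤ a * b :=
  (frobNorm_mul_le_mul_specNorm A B).trans
    (mul_le_mul hA hB (specNorm_nonneg B) ((frobNorm_nonneg A).trans hA))

theorem IsMPInv.specNorm_mul_pinv_le_one {m n : ℕ} {A : Matrix (Fin m) (Fin n) ℝ}
    {B : Matrix (Fin n) (Fin m) ℝ} (h : IsMPInv A B) : specNorm (A * B) ≤ 1 := by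
  refine specNorm_le_one_of_transpose_eq_of_mul_self_eq h.2.2.1 ?_
  rw [← Matrix.mul_assoc, h.1]

theorem IsMPInv.specNorm_pinv_mul_le_one {m n : ℕ} {A : Matrix (Fin m) (Fin n) ℝ}
    {B : Matrix (Fin n) (Fin m) ℝ} (h : IsMPInv A B) : specNorm (B * A) ≤ 1 := by
  refine specNorm_le_one_of_transpose_eq_of_mul_self_eq h.2.2.2 ?_
  rw [← Matrix.mul_assoc, h.2.1]

theorem Matrix.mul_eq_one_of_mul_mul_eq_self {K m n : Type*} [Field K] [Fintype m] [Fintype n]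
    [DecidableEq n] {X : Matrix m n K} {Y : Matrix n m K} (hXYX : X * Y * X = X)
    (hX : X.rank = Fintype.card n) : Y * X = 1 := by
  have hinj : Function.Injective X.mulVecLin := by
    rw [← LinearMap.ker_eq_bot, ← Submodule.finrank_eq_zero]
    have := LinearMap.finrank_range_add_finrank_ker X.mulVecLin
    rw [Module.finrank_fintype_fun_eq_card] at this
    change X.rank + _ = _ at this
    omega
  refine Matrix.ext_iff_mulVec.2 fun v => hinj ?_
  simp [Matrix.mulVec_mulVec, ← Matrix.mul_assoc, hXYX]

theorem Matrix.rank_eq_card_width_of_rank_mul {K l m n : Type*} [Field K] [Fintype l]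
    [Fintype m] [Fintype n] {X : Matrix m n K} {Y : Matrix n l K}
    (h : (X * Y).rank = Fintype.card n) : X.rank = Fintype.card n :=
  le_antisymm X.rank_le_card_width (h ▸ X.rank_mul_le_left Y)

section Factorization

variable {R : Type*} [CommRing R] {m n p q r s : Type*} [Fintype r] [Fintype s]
  (W : Matrix m r R) (M : Matrix r s R) (V : Matrix n s R)

theorem submatrix_mul_mul_transpose (g : p → m) (f : q → n) :
    (W * M * Vᵀ).submatrix g f = W.submatrix g id * M * (V.submatrix f id)ᵀ := by
  rw [submatrix_mul _ _ g id f Function.bijective_id, submatrix_mul _ _ g id id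
    Function.bijective_id, submatrix_id_id, transpose_submatrix]

theorem mul_mul_submatrix_eq_submatrix_id [Fintype p] [DecidableEq r] {Wd : Matrix r p R}
    {g : p → m} (hWd : Wd * W.submatrix g id = 1) (f : q → n) :
    W * Wd * (W * M * Vᵀ).submatrix g f = (W * M * Vᵀ).submatrix id f := by
  rw [submatrix_mul_mul_transpose, submatrix_mul_mul_transpose, submatrix_id_id,
    Matrix.mul_assoc, Matrix.mul_assoc, ← Matrix.mul_assoc Wd, hWd, Matrix.one_mul,
    Matrix.mul_assoc]

theorem submatrix_mul_mul_eq_submatrix_id [Fintype q] [DecidableEq s] {Vd : Matrix s q R}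
    {f : q → n} (hVd : Vd * V.submatrix f id = 1) (g : p → m) :
    (W * M * Vᵀ).submatrix g f * (Vdᵀ * Vᵀ) = (W * M * Vᵀ).submatrix g id := by
  rw [submatrix_mul_mul_transpose, submatrix_mul_mul_transpose, submatrix_id_id,
    Matrix.mul_assoc, ← Matrix.mul_assoc _ Vdᵀ, ← transpose_mul, hVd, transpose_one,
    Matrix.one_mul]

theorem mul_mul_submatrix_mul_eq [Fintype p] [Fintype q] [DecidableEq r] [DecidableEq s]
    {Wd : Matrix r p R} {Vd : Matrix s q R} {g : p → m} {f : q → n}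
    (hWd : Wd * W.submatrix g id = 1) (hVd : Vd * V.submatrix f id = 1) :
    W * Wd * (W * M * Vᵀ).submatrix g f * (Vdᵀ * Vᵀ) = W * M * Vᵀ := by
  rw [mul_mul_submatrix_eq_submatrix_id W M V hWd, submatrix_mul_mul_eq_submatrix_id W M V hVd,
    submatrix_id_id]

end Factorization

section Rank

variable {K : Type*} [Field K] {m n p q r s : Type*} [Fintype p] [Fintype q] [Fintype r]
  [Fintype s] (W : Matrix m r K) (M : Matrix r s K) (V : Matrix n s K)

theorem mul_submatrix_eq_one_of_rank_submatrix_left [DecidableEq r] {g : p → m} {f : q → n}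
    {Wd : Matrix r p K}
    (hWd : W.submatrix g id * Wd * W.submatrix g id = W.submatrix g id)
    (hrank : ((W * M * Vᵀ).submatrix g f).rank = Fintype.card r) :
    Wd * W.submatrix g id = 1 := by
  refine Matrix.mul_eq_one_of_mul_mul_eq_self hWd
    (Matrix.rank_eq_card_width_of_rank_mul (Y := M * (V.submatrix f id)ᵀ) ?_)
  rwa [← Matrix.mul_assoc, ← submatrix_mul_mul_transpose]

theorem mul_submatrix_eq_one_of_rank_submatrix_right [DecidableEq s] {g : p → m} {f : q → n}
    {Vd : Matrix s q K}
    (hVd : V.submatrix f id * Vd * V.submatrix f id = V.submatrix f id)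
    (hrank : ((W * M * Vᵀ).submatrix g f).rank = Fintype.card s) :
    Vd * V.submatrix f id = 1 := by
  refine Matrix.mul_eq_one_of_mul_mul_eq_self hVd
    (Matrix.rank_eq_card_width_of_rank_mul (Y := (W.submatrix g id * M)ᵀ) ?_)
  rwa [← transpose_transpose (V.submatrix f id), ← transpose_mul, rank_transpose,
    ← submatrix_mul_mul_transpose]

end Rank

theorem cross_approx_perturbation_eq {R : Type*} [CommRing R]
    {m n p q : Type*} [Fintype m] [Fintype n] [Fintype p] [Fintype q]
    (K : Matrix m p R) (L : Matrix q n R) (U E₁ : Matrix p q R) (E₂ : Matrix m q R)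
    (E₃ : Matrix p n R) (Ud : Matrix q p R) (hUd : (U + E₁) * Ud * (U + E₁) = U + E₁) :
    K * U * L - (K * U + E₂) * Ud * (U * L + E₃)
      = -(K * E₁ * L) - K * ((U + E₁) * Ud) * (E₃ - E₁ * L)
        - (E₂ - K * E₁) * (Ud * (U + E₁)) * L
        - (E₂ - K * E₁) * Ud * (E₃ - E₁ * L) := by
  set Ut := U + E₁ with hUt
  rw [show U = Ut - E₁ by rw [hUt, add_sub_cancel_right]]
  have hUdL : Ut * (Ud * (Ut * L)) = Ut * L := by
    rw [← Matrix.mul_assoc, ← Matrix.mul_assoc, hUd]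
  simp only [Matrix.mul_sub, Matrix.sub_mul, Matrix.mul_add, Matrix.add_mul, Matrix.mul_assoc,
    hUdL]
  abel

theorem frobNorm_cross_approx_perturbation_le {m n p q : ℕ}
    (K : Matrix (Fin m) (Fin p) ℝ) (L : Matrix (Fin q) (Fin n) ℝ)
    (U E₁ : Matrix (Fin p) (Fin q) ℝ) (E₂ : Matrix (Fin m) (Fin q) ℝ)
    (E₃ : Matrix (Fin p) (Fin n) ℝ) (Ud : Matrix (Fin q) (Fin p) ℝ) (hUd : IsMPInv (U + E₁) Ud)
    {a b ε : ℝ} (hK : specNorm K ≤ a) (hL : specNorm L ≤ b)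
    (hE₁ : frobNorm E₁ ≤ ε) (hE₂ : frobNorm E₂ ≤ ε) (hE₃ : frobNorm E₃ ≤ ε) :
    frobNorm (K * U * L - (K * U + E₂) * Ud * (U * L + E₃))
      ≤ (a + b + 3 * a * b) * ε + (1 + a) * (1 + b) * specNorm Ud * ε ^ 2 := by
  have hKE₁ := frobNorm_mul_le_of_specNorm_le_of_frobNorm_le hK hE₁
  have hX : frobNorm (E₂ - K * E₁) ≤ (1 + a) * ε := by
    linarith [frobNorm_sub_le E₂ (K * E₁)]
  have hY : frobNorm (E₃ - E₁ * L) ≤ (1 + b) * ε := by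
    linarith [frobNorm_sub_le E₃ (E₁ * L),
      frobNorm_mul_le_of_frobNorm_le_of_specNorm_le hE₁ hL]
  have h₁ := frobNorm_mul_le_of_frobNorm_le_of_specNorm_le hKE₁ hL
  have h₂ := frobNorm_mul_le_of_specNorm_le_of_frobNorm_le
    ((specNorm_mul_le _ _).trans (mul_le_mul hK hUd.specNorm_mul_pinv_le_one
      (specNorm_nonneg _) ((specNorm_nonneg K).trans hK))) hY
  have h₃ := frobNorm_mul_le_of_frobNorm_le_of_specNorm_le
    (frobNorm_mul_le_of_frobNorm_le_of_specNorm_le hX hUd.specNorm_pinv_mul_le_one) hL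
  have hXUd := frobNorm_mul_le_of_frobNorm_le_of_specNorm_le hX (le_refl (specNorm Ud))
  have h₄ : frobNorm ((E₂ - K * E₁) * Ud * (E₃ - E₁ * L))
      ≤ (1 + a) * ε * specNorm Ud * ((1 + b) * ε) :=
    (frobNorm_mul_le _ _).trans
      (mul_le_mul hXUd hY (frobNorm_nonneg _) ((frobNorm_nonneg _).trans hXUd))
  rw [cross_approx_perturbation_eq K L U E₁ E₂ E₃ Ud hUd.1]
  calc _ ≤ frobNorm (K * E₁ * L) + frobNorm (K * ((U + E₁) * Ud) * (E₃ - E₁ * L))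
        + frobNorm ((E₂ - K * E₁) * (Ud * (U + E₁)) * L)
        + frobNorm ((E₂ - K * E₁) * Ud * (E₃ - E₁ * L)) := by
        refine (frobNorm_sub_le _ _).trans (add_le_add_left ((frobNorm_sub_le _ _).trans
          (add_le_add_left ((frobNorm_sub_le _ _).trans (add_le_add_left ?_ _)) _)) _)
        rw [frobNorm_neg]
    _ ≤ _ := by linarith

theorem noisy_cross_approx_bound_general {m n r p q : ℕ}
    (A Ar F E : Matrix (Fin m) (Fin n) ℝ)
    (W : Matrix (Fin m) (Fin r) ℝ) (σ : Fin r → ℝ) (V : Matrix (Fin n) (Fin r) ℝ)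
    (hW : Wᵀ * W = 1) (hV : Vᵀ * V = 1)
    (hAr : Ar = W * Matrix.diagonal σ * Vᵀ)
    (hA : A = Ar + F)
    (g : Fin p → Fin m) (f : Fin q → Fin n)
    (hg : Function.Injective g) (hf : Function.Injective f)
    (hrankU : (Ar.submatrix g f).rank = r)
    (Udag : Matrix (Fin q) (Fin p) ℝ) (hUdag : IsMPInv ((A + E).submatrix g f) Udag)
    (Wdag : Matrix (Fin r) (Fin p) ℝ) (hWdag : IsMPInv (W.submatrix g id) Wdag)
    (Vdag : Matrix (Fin r) (Fin q) ℝ) (hVdag : IsMPInv (V.submatrix f id) Vdag) :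
    frobNorm (A - (A + E).submatrix id f * Udag * (A + E).submatrix g id)
      ≤ (specNorm Wdag + specNorm Vdag + 3 * specNorm Wdag * specNorm Vdag)
          * frobNorm E
        + (specNorm Wdag + specNorm Vdag + 3 * specNorm Wdag * specNorm Vdag + 1)
          * frobNorm F
        + (specNorm Wdag + specNorm Vdag + specNorm Wdag * specNorm Vdag + 1)
          * specNorm Udag * (frobNorm E + frobNorm F) ^ 2 := by
  subst hAr
  have hrank := hrankU.trans (Fintype.card_fin r).symm
  have hWI := mul_submatrix_eq_one_of_rank_submatrix_left W _ V hWdag.1 hrank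
  have hVJ := mul_submatrix_eq_one_of_rank_submatrix_right W _ V hVdag.1 hrank
  have hsplit : ∀ {p' q' : ℕ} (g' : Fin p' → Fin m) (f' : Fin q' → Fin n),
      (A + E).submatrix g' f'
        = (W * diagonal σ * Vᵀ).submatrix g' f' + (F + E).submatrix g' f' :=
    fun _ _ => by rw [hA, add_assoc]; rfl
  have hFE : frobNorm (F + E) ≤ frobNorm E + frobNorm F :=
    (frobNorm_add_le F E).trans_eq (add_comm _ _)
  have key := frobNorm_cross_approx_perturbation_le (W * Wdag) (Vdagᵀ * Vᵀ)
    ((W * diagonal σ * Vᵀ).submatrix g f) ((F + E).submatrix g f) ((F + E).submatrix id f)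
    ((F + E).submatrix g id) Udag (hsplit g f ▸ hUdag)
    (specNorm_mul_le_of_transpose_mul_self_eq_one hW Wdag)
    (specNorm_mul_transpose_le_of_transpose_mul_self_eq_one hV Vdagᵀ)
    ((frobNorm_submatrix_le _ hg hf).trans hFE)
    ((frobNorm_submatrix_le _ Function.injective_id hf).trans hFE)
    ((frobNorm_submatrix_le _ hg Function.injective_id).trans hFE)
  rw [specNorm_transpose, mul_mul_submatrix_mul_eq W _ V hWI hVJ,
    mul_mul_submatrix_eq_submatrix_id W _ V hWI, submatrix_mul_mul_eq_submatrix_id W _ V hVJ,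
    ← hsplit, ← hsplit] at key
  calc _ = frobNorm (F + (W * diagonal σ * Vᵀ - (A + E).submatrix id f * Udag
          * (A + E).submatrix g id)) := by
        nth_rewrite 1 [hA]
        abel_nf
    _ ≤ frobNorm F + _ := frobNorm_add_le _ _
    _ ≤ _ := by linarith

/-- noisy cross approximation error bound, `Ã = A + E`, `A = A_r + F`. -/
theorem noisy_cross_approx_bound {m n r p q : ℕ}
    (A Ar F E : Matrix (Fin m) (Fin n) ℝ)
    (W : Matrix (Fin m) (Fin r) ℝ) (σ : Fin r → ℝ) (V : Matrix (Fin n) (Fin r) ℝ)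
    (hW : Wᵀ * W = 1) (hV : Vᵀ * V = 1) (hσ : ∀ i, 0 < σ i)
    (hAr : Ar = W * Matrix.diagonal σ * Vᵀ)
    (hA : A = Ar + F)
    (g : Fin p → Fin m) (f : Fin q → Fin n)
    (hg : Function.Injective g) (hf : Function.Injective f)
    (hrankU : (Ar.submatrix g f).rank = r)
    (Udag : Matrix (Fin q) (Fin p) ℝ) (hUdag : IsMPInv ((A + E).submatrix g f) Udag)
    (Wdag : Matrix (Fin r) (Fin p) ℝ) (hWdag : IsMPInv (W.submatrix g id) Wdag)
    (Vdag : Matrix (Fin r) (Fin q) ℝ) (hVdag : IsMPInv (V.submatrix f id) Vdag) :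
    frobNorm (A - (A + E).submatrix id f * Udag * (A + E).submatrix g id)
      ≤ (specNorm Wdag + specNorm Vdag + 3 * specNorm Wdag * specNorm Vdag)
          * frobNorm E
        + (specNorm Wdag + specNorm Vdag + 3 * specNorm Wdag * specNorm Vdag + 1)
          * frobNorm F
        + (specNorm Wdag + specNorm Vdag + specNorm Wdag * specNorm Vdag + 1)
          * specNorm Udag * (frobNorm E + frobNorm F) ^ 2 :=
  noisy_cross_approx_bound_general A Ar F E W σ V hW hV hAr hA g f hg hf hrankU Udag hUdag Wdag
    hWdag Vdag hVdag
end

section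
/- Let (e_l) be nonnegative reals with e_0 = 0 and e_{l+1} ≤ (r+1)ε + 3κ e_l for all l, where ε ≥ 0, κ > 0, r ≥ 0, and 3κ ≠ 1. Then e_L ≤ ((3κ)^L − 1)/(3κ − 1) · (r+1)ε for every L ≥ 0. In particular, for L = ⌈log₂ N⌉ this recovers the Frobenius-norm cross approximation error bound ‖T − T̂‖_F ≤ ((3κ)^{⌈log₂ N⌉} − 1)/(3κ − 1) · (r+1)ε. -/
open Matrix

/-- error recursion with amplification factor `3κ` and fresh
error `(r+1)ε` per level; at level `L = ⌈log₂ N⌉` this gives the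
Frobenius-norm tensor-train cross approximation bound. -/
theorem tt_error_recursion_bound (e : ℕ → ℝ) (κ ε : ℝ) (r : ℕ)
    (hκ : 0 < κ) (hε : 0 ≤ ε) (hne : 3 * κ ≠ 1)
    (hnn : ∀ l, 0 ≤ e l) (h0 : e 0 = 0)
    (hrec : ∀ l, e (l + 1) ≤ ((r : ℝ) + 1) * ε + 3 * κ * e l) :
    ∀ L, e L ≤ ((3 * κ) ^ L - 1) / (3 * κ - 1) * (((r : ℝ) + 1) * ε) := by
  intro L
  have key : e L ≤ (∑ i ∈ Finset.range L, (3 * κ) ^ i) * (((r : ℝ) + 1) * ε) := by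
    induction L with
    | zero => simp [h0]
    | succ n ih =>
      calc e (n + 1) ≤ ((r : ℝ) + 1) * ε + 3 * κ * e n := hrec n
        _ ≤ ((r : ℝ) + 1) * ε + 3 * κ * ((∑ i ∈ Finset.range n, (3 * κ) ^ i) * (((r : ℝ) + 1) * ε)) := by
            have h3 : (0:ℝ) ≤ 3 * κ := by positivity
            nlinarith [ih]
        _ = (∑ i ∈ Finset.range (n + 1), (3 * κ) ^ i) * (((r : ℝ) + 1) * ε) := by
            rw [geom_sum_succ]; ring
  rwa [geom_sum_eq hne] at key
end
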